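/- arXiv:2401.14799 — 2 statements merged into one kernel-verified Lean document; each statement's English description precedes it below -/
import Mathlib

section
/- For any u, v in Z_{2^s}, the Carlet Gray map satisfies φ_s(u) + φ_s(v) = φ_s(u + v - 2(u ⊙ v)), where addition of binary vectors is componentwise mod 2. -/
/-- The `i`-th bit of the natural number `n`, as an element of `ZMod 2`. -/
def bitZ (n i : ℕ) : ZMod 2 := if n.testBit i then 1 else 0

/-- Carlet's Gray map `φ_s : ZMod (2^s) → (ZMod 2)^{2^{s-1}}`:
`φ_s(u) = (u_{s-1},…,u_{s-1}) + (u_0,…,u_{s-2})·Y_{s-1}`, where `Y_{s-1}` is the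
`(s-1) × 2^{s-1}` matrix whose `j`-th column is the binary expansion of `j`. -/
def carletGray (s : ℕ) (u : ZMod (2 ^ s)) : Fin (2 ^ (s - 1)) → ZMod 2 :=
  fun j => bitZ u.val (s - 1) + ∑ i : Fin (s - 1), bitZ u.val i * bitZ (j : ℕ) i

/-- The operation `⊙` on `ZMod (2^s)`: the binary expansion of `u ⊙ v` is the
coordinatewise product (AND) of the binary expansions of `u` and `v`. -/
def odot (s : ℕ) (u v : ZMod (2 ^ s)) : ZMod (2 ^ s) :=
  ((u.val &&& v.val : ℕ) : ZMod (2 ^ s))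

lemma nat_add_eq_xor (a b : ℕ) : a + b = (a ^^^ b) + 2 * (a &&& b) := by
  induction a using Nat.binaryRec generalizing b with
  | zero => simp
  | bit c m ih =>
    induction b using Nat.binaryRec with
    | zero => simp
    | bit d n _ =>
      rw [Nat.xor_bit, Nat.land_bit, Nat.bit_val, Nat.bit_val, Nat.bit_val, Nat.bit_val]
      have := ih n
      cases c <;> cases d <;> simp <;> omega

lemma bitZ_xor (a b i : ℕ) : bitZ (a ^^^ b) i = bitZ a i + bitZ b i := by
  unfold bitZ
  rw [Nat.testBit_xor]
  cases a.testBit i <;> cases b.testBit i <;> decide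

/-- For any `u, v ∈ ZMod (2^s)`, `φ_s(u) + φ_s(v) = φ_s(u + v - 2(u ⊙ v))`. -/
theorem carletGray_add (s : ℕ) (hs : 1 ≤ s) (u v : ZMod (2 ^ s)) :
    carletGray s u + carletGray s v = carletGray s (u + v - 2 * odot s u v) := by
  haveI : NeZero (2 ^ s) := ⟨by positivity⟩
  have hx : u.val ^^^ v.val < 2 ^ s :=
    Nat.xor_lt_two_pow (ZMod.val_lt u) (ZMod.val_lt v)
  have key : u + v - 2 * odot s u v = ((u.val ^^^ v.val : ℕ) : ZMod (2 ^ s)) := by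
    unfold odot
    conv_lhs => rw [← ZMod.natCast_zmod_val u, ← ZMod.natCast_zmod_val v]
    push_cast
    rw_mod_cast [nat_add_eq_xor u.val v.val]
    push_cast
    simp only [ZMod.natCast_zmod_val]
    ring
  have hval : (u + v - 2 * odot s u v).val = u.val ^^^ v.val := by
    rw [key, ZMod.val_cast_of_lt hx]
  funext j
  simp only [Pi.add_apply, carletGray, hval, bitZ_xor, add_mul, Finset.sum_add_distrib]
  ring
end

section
/- For any u, v in Z_{2^s}, the Carlet Gray map satisfies φ_s(2^{s-1}u + v) = φ_s(2^{s-1}u) + φ_s(v). -/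
lemma carletGray_zero (s : ℕ) : carletGray s 0 = 0 := by
  funext j
  simp [carletGray, bitZ]

lemma carletGray_of_val_eq_xor {s : ℕ} {u v w : ZMod (2 ^ s)} (h : w.val = u.val ^^^ v.val) :
    carletGray s w = carletGray s u + carletGray s v := by
  funext j
  simp only [carletGray, Pi.add_apply, h, bitZ_xor, add_mul, Finset.sum_add_distrib]
  ring

namespace Nat

lemma two_pow_add_mod_two_pow_succ {n b : ℕ} (hb : b < 2 ^ (n + 1)) :
    (2 ^ n + b) % 2 ^ (n + 1) = 2 ^ n ^^^ b := by
  apply eq_of_testBit_eq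
  intro i
  rw [testBit_mod_two_pow, testBit_xor, testBit_two_pow]
  rcases lt_trichotomy i n with hi | rfl | hi
  · simp [hi.ne', testBit_two_pow_add_gt hi, hi.trans n.lt_succ_self]
  · simp [testBit_two_pow_add_eq]
  · have hb' : b < 2 ^ i := hb.trans_le (Nat.pow_le_pow_right two_pos hi)
    simp [hi.ne, testBit_lt_two_pow hb', show ¬ i < n + 1 by omega]

end Nat

lemma ZMod.val_two_pow_add (n : ℕ) (v : ZMod (2 ^ (n + 1))) :
    ((2 : ZMod (2 ^ (n + 1))) ^ n + v).val = ((2 : ZMod (2 ^ (n + 1))) ^ n).val ^^^ v.val := by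
  have hval : ((2 : ZMod (2 ^ (n + 1))) ^ n).val = 2 ^ n := by
    exact_mod_cast ZMod.val_natCast_of_lt (Nat.pow_lt_pow_right one_lt_two n.lt_succ_self)
  rw [ZMod.val_add, hval, Nat.two_pow_add_mod_two_pow_succ v.val_lt]

lemma ZMod.two_pow_mul_eq_zero_or_eq (n : ℕ) (u : ZMod (2 ^ (n + 1))) :
    2 ^ n * u = 0 ∨ 2 ^ n * u = 2 ^ n := by
  have htop : (2 : ZMod (2 ^ (n + 1))) ^ (n + 1) = 0 := by
    exact_mod_cast ZMod.natCast_self (2 ^ (n + 1))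
  rw [← ZMod.natCast_zmod_val u]
  obtain ⟨k, hk | hk⟩ := Nat.even_or_odd' u.val <;> rw [hk] <;> push_cast
  · left
    linear_combination (k : ZMod (2 ^ (n + 1))) * htop
  · right
    linear_combination (k : ZMod (2 ^ (n + 1))) * htop

theorem carletGray_add_top_general (s : ℕ) (u v : ZMod (2 ^ s)) :
    carletGray s (2 ^ (s - 1) * u + v) = carletGray s (2 ^ (s - 1) * u) + carletGray s v := by
  cases s with
  | zero =>
    have : Subsingleton (ZMod (2 ^ 0)) := inferInstanceAs (Subsingleton (ZMod 1))
    simp only [Subsingleton.elim _ (0 : ZMod (2 ^ 0)), carletGray_zero, zero_add]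
  | succ n =>
    simp only [Nat.add_sub_cancel]
    rcases ZMod.two_pow_mul_eq_zero_or_eq n u with h | h <;> rw [h]
    · rw [zero_add, carletGray_zero, zero_add]
    · exact carletGray_of_val_eq_xor (ZMod.val_two_pow_add n v)

/-- For any `u, v ∈ ZMod (2^s)`, `φ_s(2^{s-1}·u + v) = φ_s(2^{s-1}·u) + φ_s(v)`. -/
theorem carletGray_add_top (s : ℕ) (hs : 1 ≤ s) (u v : ZMod (2 ^ s)) :
    carletGray s (2 ^ (s - 1) * u + v) = carletGray s (2 ^ (s - 1) * u) + carletGray s v :=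
  carletGray_add_top_general s u v
end
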